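/- Let q > 1 be a real number, and let C be a convex cone in ℝⁿ (with the standard inner product) whose interior is nonempty. For every interior point s of C, the family y ↦ q^{−⟨y, s⟩}, indexed by the lattice points y ∈ C^∨ ∩ ℤⁿ of the dual cone, is summable. -/

import Mathlib

/-!
If the closed ball of radius `ε` about `s` lies in `C`, then testing a dual vector `v` against
`s - (ε / ‖v‖) • v` gives `⟪v, s⟫ ≥ ε ‖v‖`. Hence the terms are dominated by `b ^ ‖y‖` with
`b = q ^ (-ε) < 1`, and since every coordinate satisfies `|yᵢ| ≤ ‖y‖`, these are in turn dominated by
a product of two-sided geometric series in the coordinates, which is summable over `ℤⁿ`.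
-/

open RealInnerProductSpace

lemma exists_mul_norm_le_inner_of_mem_interior {E : Type*} [NormedAddCommGroup E]
    [InnerProductSpace ℝ E] {K : Set E} {s : E} (hs : s ∈ interior K) :
    ∃ ε > 0, ∀ v, (∀ x ∈ K, 0 ≤ ⟪x, v⟫) → ε * ‖v‖ ≤ ⟪v, s⟫ := by
  obtain ⟨ε, hε, hball⟩ := Metric.nhds_basis_closedBall.mem_iff.mp (mem_interior_iff_mem_nhds.mp hs)
  refine ⟨ε, hε, fun v hv => ?_⟩
  rcases eq_or_ne v 0 with rfl | hv0
  · simp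
  have hmem : s - (ε / ‖v‖) • v ∈ K := hball <| by
    rw [Metric.mem_closedBall, dist_eq_norm, sub_sub_cancel_left, norm_neg, norm_smul,
      Real.norm_of_nonneg (by positivity), div_mul_cancel₀ _ (norm_ne_zero_iff.mpr hv0)]
  have hdual := hv _ hmem
  rw [inner_sub_left, real_inner_smul_left, real_inner_self_eq_norm_sq, real_inner_comm] at hdual
  have hscale : ε / ‖v‖ * ‖v‖ ^ 2 = ε * ‖v‖ := by field_simp
  linarith

lemma summable_pow_natAbs {r : ℝ} (h0 : 0 ≤ r) (h1 : r < 1) :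
    Summable fun k : ℤ => r ^ k.natAbs :=
  .of_nat_of_neg (by simpa using summable_geometric_of_lt_one h0 h1)
    (by simpa using summable_geometric_of_lt_one h0 h1)

lemma summable_fin_prod_of_nonneg {α : Type*} {f : α → ℝ} (hf : 0 ≤ f) (hs : Summable f) (n : ℕ) :
    Summable fun y : Fin n → α => ∏ i, f (y i) := by
  induction n with
  | zero => exact .of_finite
  | succ n ih =>
    have hprod : Summable fun p : α × (Fin n → α) => f p.1 * ∏ i, f (p.2 i) :=
      Summable.mul_of_nonneg (f := f) (g := fun y : Fin n → α => ∏ i, f (y i)) hs ih hf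
        fun y => Finset.prod_nonneg fun i _ => hf _
    simpa [Fin.prod_univ_succ, Function.comp_def, Fin.tail] using
      hprod.comp_injective (Fin.consEquiv fun _ => α).symm.injective

lemma summable_rpow_norm_intCast {b : ℝ} (hb0 : 0 < b) (hb1 : b < 1) (n : ℕ) :
    Summable fun y : Fin n → ℤ =>
      b ^ ‖(WithLp.toLp 2 fun i => (y i : ℝ) : EuclideanSpace ℝ (Fin n))‖ := by
  set r := b ^ ((n : ℝ) + 1)⁻¹
  have hr0 : 0 < r := by positivity
  have hr1 : r < 1 := Real.rpow_lt_one hb0.le hb1 (by positivity)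
  refine .of_nonneg_of_le (fun y => by positivity) (fun y => ?_)
    (summable_fin_prod_of_nonneg (fun k => by positivity) (summable_pow_natAbs hr0.le hr1) n)
  set v : EuclideanSpace ℝ (Fin n) := WithLp.toLp 2 fun i => (y i : ℝ)
  have hcoord (i : Fin n) : ((y i).natAbs : ℝ) ≤ ‖v‖ := by
    simpa [v, Nat.cast_natAbs] using PiLp.norm_apply_le v i
  have hsum : ((∑ i, (y i).natAbs : ℕ) : ℝ) ≤ ((n : ℝ) + 1) * ‖v‖ := by
    push_cast
    calc ∑ i, ((y i).natAbs : ℝ) ≤ ∑ _i : Fin n, ‖v‖ := Finset.sum_le_sum fun i _ => hcoord i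
      _ = n * ‖v‖ := by simp
      _ ≤ (n + 1) * ‖v‖ := by nlinarith [norm_nonneg v]
  calc b ^ ‖v‖ ≤ b ^ (((n : ℝ) + 1)⁻¹ * (∑ i, (y i).natAbs : ℕ)) :=
        Real.rpow_le_rpow_of_exponent_ge hb0 hb1.le <| by
          rw [inv_mul_le_iff₀ (by positivity)]; exact hsum
    _ = ∏ i, r ^ (y i).natAbs := by
        rw [Real.rpow_mul hb0.le, Real.rpow_natCast, Finset.prod_pow_eq_pow_sum]

theorem stmt_4_general (q : ℝ) (hq : 1 < q) (n : ℕ)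
    (C : ConvexCone ℝ (EuclideanSpace ℝ (Fin n)))
    (s : EuclideanSpace ℝ (Fin n))
    (hs : s ∈ interior (C : Set (EuclideanSpace ℝ (Fin n)))) :
    Summable fun y : {y : Fin n → ℤ //
        ∀ x ∈ C, (0:ℝ) ≤ inner ℝ x
          ((WithLp.equiv 2 (Fin n → ℝ)).symm fun i => (y i : ℝ))} =>
      q ^ (-(inner ℝ ((WithLp.equiv 2 (Fin n → ℝ)).symm fun i => ((y : Fin n → ℤ) i : ℝ)) s : ℝ)) := by
  obtain ⟨ε, hε, hdual⟩ := exists_mul_norm_le_inner_of_mem_interior hs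
  have hq0 : 0 < q := one_pos.trans hq
  refine .of_nonneg_of_le (fun y => by positivity) (fun y => ?_)
    ((summable_rpow_norm_intCast (b := q ^ (-ε)) (by positivity)
      (Real.rpow_lt_one_of_one_lt_of_neg hq (neg_neg_of_pos hε)) n).comp_injective
      Subtype.val_injective)
  have hy := hdual _ y.2
  calc _ ≤ q ^ (-ε * ‖(WithLp.equiv 2 (Fin n → ℝ)).symm fun i => ((y : Fin n → ℤ) i : ℝ)‖) :=
        Real.rpow_le_rpow_of_exponent_le hq.le (by linarith)
    _ = _ := Real.rpow_mul hq0.le _ _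

/-- For `q > 1` and a convex cone `C ⊆ ℝⁿ` with nonempty interior, the family
`y ↦ q^{−⟨y,s⟩}` indexed by the lattice points of the dual cone is summable
whenever `s` is interior to `C`. -/
theorem stmt_4 (q : ℝ) (hq : 1 < q) (n : ℕ)
    (C : ConvexCone ℝ (EuclideanSpace ℝ (Fin n)))
    (hC : (interior (C : Set (EuclideanSpace ℝ (Fin n)))).Nonempty)
    (s : EuclideanSpace ℝ (Fin n))
    (hs : s ∈ interior (C : Set (EuclideanSpace ℝ (Fin n)))) :
    Summable fun y : {y : Fin n → ℤ //
        ∀ x ∈ C, (0:ℝ) ≤ inner ℝ x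
          ((WithLp.equiv 2 (Fin n → ℝ)).symm fun i => (y i : ℝ))} =>
      q ^ (-(inner ℝ ((WithLp.equiv 2 (Fin n → ℝ)).symm fun i => ((y : Fin n → ℤ) i : ℝ)) s : ℝ)) :=
  stmt_4_general q hq n C s hs
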